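/- (Theorem 3.1, part 3: Gâteaux derivative of G₂.) Let a < b be real numbers and let f, k, g : ℝ → ℝ be continuous on [a,b]. Then the limit as ε → 0 (ε ≠ 0) of (1/ε) · [ ∫_a^b (D_g(x) − D_{f+εk}(x))² dx − ∫_a^b (D_g(x) − D_f(x))² dx ] exists and equals −2 ∫_a^b k(x) · (u_g(x) − u_f(x)) dx. -/

import Mathlib

open intervalIntegral Filter

/-- `uFun a b f` is `-Δ⁻¹ f`: the solution of `-y'' = f`, `y a = 0`, `y b = 0`,
given by the explicit double-integral formula of the paper. -/
noncomputable def uFun (a b : ℝ) (f : ℝ → ℝ) (x : ℝ) : ℝ :=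
  (∫ η in x..b, ∫ ξ in a..η, f ξ) -
    ((b - x) / (b - a)) * ∫ η in a..b, ∫ ξ in a..η, f ξ

/-- `DFun a b f = (uFun a b f)'`, the derivative of `-Δ⁻¹ f`. -/
noncomputable def DFun (a b : ℝ) (f : ℝ → ℝ) (x : ℝ) : ℝ :=
  -(∫ ξ in a..x, f ξ) + (1 / (b - a)) * ∫ η in a..b, ∫ ξ in a..η, f ξ

open MeasureTheory

section Aux

variable {a b : ℝ}

lemma primitive_cont {h : ℝ → ℝ} (hc : Continuous h) :
    Continuous fun x => ∫ t in a..x, h t := by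
  refine continuous_iff_continuousAt.2 fun x => ?_
  exact ((hc.integral_hasStrictDerivAt a x).hasDerivAt).continuousAt

lemma hasDerivAt_DFun {h : ℝ → ℝ} (hc : Continuous h) (x : ℝ) :
    HasDerivAt (DFun a b h) (-h x) x := by
  have := (((hc.integral_hasStrictDerivAt a x).hasDerivAt).neg).add_const
    ((1 / (b - a)) * ∫ η in a..b, ∫ ξ in a..η, h ξ)
  exact this

lemma cont_DFun {h : ℝ → ℝ} (hc : Continuous h) : Continuous (DFun a b h) :=
  continuous_iff_continuousAt.2 fun x => (hasDerivAt_DFun hc x).continuousAt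

lemma hasDerivAt_uFun (hab : a < b) {h : ℝ → ℝ} (hc : Continuous h) (x : ℝ) :
    HasDerivAt (uFun a b h) (DFun a b h x) x := by
  set G : ℝ → ℝ := fun η => ∫ ξ in a..η, h ξ with hG
  have hGc : Continuous G := primitive_cont hc
  have key : uFun a b h = fun x =>
      ((∫ η in a..b, G η) - ∫ η in a..x, G η) - ((b - x) / (b - a)) * ∫ η in a..b, G η := by
    funext y
    rw [uFun, integral_interval_sub_left (hGc.intervalIntegrable a b) (hGc.intervalIntegrable a y)]
  rw [key]
  have h1 : HasDerivAt (fun y => (∫ η in a..b, G η) - ∫ η in a..y, G η) (-(G x)) x :=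
    ((hGc.integral_hasStrictDerivAt a x).hasDerivAt).const_sub _
  have h2 : HasDerivAt (fun y => ((b - y) / (b - a)) * ∫ η in a..b, G η)
      ((-1 / (b - a)) * ∫ η in a..b, G η) x :=
    (((hasDerivAt_id x).const_sub b).div_const (b - a)).mul_const _
  have := h1.sub h2
  refine this.congr_deriv ?_
  rw [DFun]
  ring

lemma uFun_a (hab : a < b) (h : ℝ → ℝ) : uFun a b h a = 0 := by
  rw [uFun, div_self (sub_ne_zero.2 hab.ne'), one_mul, sub_self]

lemma uFun_b (h : ℝ → ℝ) : uFun a b h b = 0 := by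
  simp [uFun]

end Aux

lemma main_cont (a b : ℝ) (hab : a < b) (f k g : ℝ → ℝ)
    (hf : Continuous f) (hk : Continuous k) (hg : Continuous g) :
    Tendsto
      (fun ε : ℝ => (1 / ε) *
        ((∫ x in a..b, (DFun a b g x - DFun a b (fun t => f t + ε * k t) x) ^ 2) -
          ∫ x in a..b, (DFun a b g x - DFun a b f x) ^ 2))
      (nhdsWithin 0 {0}ᶜ)
      (nhds (-2 * ∫ x in a..b, k x * (uFun a b g x - uFun a b f x))) := by
  set A : ℝ → ℝ := fun x => DFun a b g x - DFun a b f x with hA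
  set B : ℝ → ℝ := DFun a b k with hB
  have hAc : Continuous A := (cont_DFun hg).sub (cont_DFun hf)
  have hBc : Continuous B := cont_DFun hk
  -- linearity of DFun
  have hlin : ∀ ε x, DFun a b (fun t => f t + ε * k t) x = DFun a b f x + ε * DFun a b k x := by
    intro ε x
    have hinner : ∀ y : ℝ, (∫ ξ in a..y, (f ξ + ε * k ξ))
        = (∫ ξ in a..y, f ξ) + ε * ∫ ξ in a..y, k ξ := by
      intro y
      rw [intervalIntegral.integral_add (f := f) (g := fun ξ => ε * k ξ) (hf.intervalIntegrable a y) ((continuous_const.mul hk).intervalIntegrable a y),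
        intervalIntegral.integral_const_mul]
    have houter : (∫ η in a..b, ∫ ξ in a..η, (f ξ + ε * k ξ))
        = (∫ η in a..b, ∫ ξ in a..η, f ξ) + ε * ∫ η in a..b, ∫ ξ in a..η, k ξ := by
      simp_rw [hinner]
      rw [intervalIntegral.integral_add (f := fun η => ∫ ξ in a..η, f ξ) (g := fun η => ε * ∫ ξ in a..η, k ξ) ((primitive_cont hf).intervalIntegrable a b)
        ((continuous_const.mul (primitive_cont hk)).intervalIntegrable a b),
        intervalIntegral.integral_const_mul]
    rw [DFun, DFun, DFun, hinner, houter]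
    ring
  -- the difference of integrals, computed
  have hkey : ∀ ε : ℝ,
      ((∫ x in a..b, (DFun a b g x - DFun a b (fun t => f t + ε * k t) x) ^ 2) -
        ∫ x in a..b, (DFun a b g x - DFun a b f x) ^ 2)
      = ε * ((-2) * (∫ x in a..b, B x * A x) + ε * ∫ x in a..b, (B x) ^ 2) := by
    intro ε
    have e1 : (∫ x in a..b, (DFun a b g x - DFun a b (fun t => f t + ε * k t) x) ^ 2)
        = ∫ x in a..b, ((A x) ^ 2 + (ε * (-2 * (B x * A x) + ε * (B x) ^ 2))) := by
      refine integral_congr fun x _ => ?_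
      rw [hlin ε x]
      simp only [hA, hB]
      ring
    rw [e1, intervalIntegral.integral_add (by apply Continuous.intervalIntegrable; fun_prop) (by apply Continuous.intervalIntegrable; fun_prop),
      intervalIntegral.integral_const_mul,
      intervalIntegral.integral_add (by apply Continuous.intervalIntegrable; fun_prop) (by apply Continuous.intervalIntegrable; fun_prop),
      intervalIntegral.integral_const_mul, intervalIntegral.integral_const_mul]
    ring
  -- integration by parts
  have hibp : (∫ x in a..b, B x * A x) = ∫ x in a..b, k x * (uFun a b g x - uFun a b f x) := by
    have := integral_mul_deriv_eq_deriv_mul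
      (u := B) (u' := fun x => -k x)
      (v := fun x => uFun a b g x - uFun a b f x) (v' := A)
      (fun x _ => hasDerivAt_DFun hk x)
      (fun x _ => (hasDerivAt_uFun hab hg x).sub (hasDerivAt_uFun hab hf x))
      ((hk.neg).intervalIntegrable a b) (hAc.intervalIntegrable a b)
    simp only [uFun_a hab, uFun_b, sub_self, mul_zero, sub_zero, zero_sub] at this
    rw [this, ← intervalIntegral.integral_neg]
    refine integral_congr fun x _ => ?_
    ring
  -- final limit computation
  have heq : ∀ ε ∈ ({0}ᶜ : Set ℝ),
      (1 / ε) * ((∫ x in a..b, (DFun a b g x - DFun a b (fun t => f t + ε * k t) x) ^ 2) -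
        ∫ x in a..b, (DFun a b g x - DFun a b f x) ^ 2)
      = (-2) * (∫ x in a..b, B x * A x) + ε * ∫ x in a..b, (B x) ^ 2 := by
    intro ε hε
    rw [hkey ε, one_div, inv_mul_cancel_left₀ (by simpa using hε)]
  have htend : Tendsto (fun ε : ℝ => (-2) * (∫ x in a..b, B x * A x) + ε * ∫ x in a..b, (B x) ^ 2)
      (nhdsWithin 0 {0}ᶜ) (nhds ((-2) * ∫ x in a..b, B x * A x)) := by
    have : Tendsto (fun ε : ℝ => (-2) * (∫ x in a..b, B x * A x) + ε * ∫ x in a..b, (B x) ^ 2)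
        (nhds 0) (nhds ((-2) * (∫ x in a..b, B x * A x) + 0 * ∫ x in a..b, (B x) ^ 2)) := by
      exact ((tendsto_id.mul_const _).const_add _)
    rw [zero_mul, add_zero] at this
    exact this.mono_left nhdsWithin_le_nhds
  rw [← hibp]
  exact htend.congr' (eventuallyEq_nhdsWithin_of_eqOn fun ε hε => (heq ε hε).symm)

lemma prim_congr {a b : ℝ} (hab : a ≤ b) {h he : ℝ → ℝ} (hE : Set.EqOn h he (Set.Icc a b))
    {y : ℝ} (hy : y ∈ Set.Icc a b) : (∫ ξ in a..y, h ξ) = ∫ ξ in a..y, he ξ := by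
  refine integral_congr (hE.mono ?_)
  rw [Set.uIcc_of_le hy.1]
  exact Set.Icc_subset_Icc le_rfl hy.2

lemma DFun_congr {a b : ℝ} (hab : a ≤ b) {h he : ℝ → ℝ} (hE : Set.EqOn h he (Set.Icc a b))
    {x : ℝ} (hx : x ∈ Set.Icc a b) : DFun a b h x = DFun a b he x := by
  have hdouble : (∫ η in a..b, ∫ ξ in a..η, h ξ) = ∫ η in a..b, ∫ ξ in a..η, he ξ := by
    refine integral_congr fun η hη => ?_
    rw [Set.uIcc_of_le hab] at hη
    exact prim_congr hab hE hη
  rw [DFun, DFun, prim_congr hab hE hx, hdouble]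

lemma uFun_congr {a b : ℝ} (hab : a ≤ b) {h he : ℝ → ℝ} (hE : Set.EqOn h he (Set.Icc a b))
    {x : ℝ} (hx : x ∈ Set.Icc a b) : uFun a b h x = uFun a b he x := by
  have hdouble : (∫ η in a..b, ∫ ξ in a..η, h ξ) = ∫ η in a..b, ∫ ξ in a..η, he ξ := by
    refine integral_congr fun η hη => ?_
    rw [Set.uIcc_of_le hab] at hη
    exact prim_congr hab hE hη
  have houter : (∫ η in x..b, ∫ ξ in a..η, h ξ) = ∫ η in x..b, ∫ ξ in a..η, he ξ := by
    refine integral_congr fun η hη => ?_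
    rw [Set.uIcc_of_le hx.2] at hη
    exact prim_congr hab hE ⟨hx.1.trans hη.1, hη.2⟩
  rw [uFun, uFun, hdouble, houter]

theorem stmt_7 (a b : ℝ) (hab : a < b) (f k g : ℝ → ℝ)
    (hf : ContinuousOn f (Set.Icc a b)) (hk : ContinuousOn k (Set.Icc a b))
    (hg : ContinuousOn g (Set.Icc a b)) :
    Tendsto
      (fun ε : ℝ => (1 / ε) *
        ((∫ x in a..b, (DFun a b g x - DFun a b (fun t => f t + ε * k t) x) ^ 2) -
          ∫ x in a..b, (DFun a b g x - DFun a b f x) ^ 2))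
      (nhdsWithin 0 {0}ᶜ)
      (nhds (-2 * ∫ x in a..b, k x * (uFun a b g x - uFun a b f x))) := by
  set fe : ℝ → ℝ := Set.IccExtend hab.le ((Set.Icc a b).restrict f) with hfe_def
  set ke : ℝ → ℝ := Set.IccExtend hab.le ((Set.Icc a b).restrict k) with hke_def
  set ge : ℝ → ℝ := Set.IccExtend hab.le ((Set.Icc a b).restrict g) with hge_def
  have hfe : Continuous fe := (continuousOn_iff_continuous_restrict.1 hf).Icc_extend'
  have hke : Continuous ke := (continuousOn_iff_continuous_restrict.1 hk).Icc_extend'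
  have hge : Continuous ge := (continuousOn_iff_continuous_restrict.1 hg).Icc_extend'
  have hEf : Set.EqOn f fe (Set.Icc a b) := fun x hx =>
    (Set.IccExtend_of_mem hab.le ((Set.Icc a b).restrict f) hx).symm
  have hEk : Set.EqOn k ke (Set.Icc a b) := fun x hx =>
    (Set.IccExtend_of_mem hab.le ((Set.Icc a b).restrict k) hx).symm
  have hEg : Set.EqOn g ge (Set.Icc a b) := fun x hx =>
    (Set.IccExtend_of_mem hab.le ((Set.Icc a b).restrict g) hx).symm
  have hmain := main_cont a b hab fe ke ge hfe hke hge
  have hfun : (fun ε : ℝ => (1 / ε) *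
        ((∫ x in a..b, (DFun a b g x - DFun a b (fun t => f t + ε * k t) x) ^ 2) -
          ∫ x in a..b, (DFun a b g x - DFun a b f x) ^ 2))
      = fun ε : ℝ => (1 / ε) *
        ((∫ x in a..b, (DFun a b ge x - DFun a b (fun t => fe t + ε * ke t) x) ^ 2) -
          ∫ x in a..b, (DFun a b ge x - DFun a b fe x) ^ 2) := by
    funext ε
    have hEsum : Set.EqOn (fun t => f t + ε * k t) (fun t => fe t + ε * ke t) (Set.Icc a b) :=
      fun x hx => by simp only [hEf hx, hEk hx]
    have h1 : (∫ x in a..b, (DFun a b g x - DFun a b (fun t => f t + ε * k t) x) ^ 2)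
        = ∫ x in a..b, (DFun a b ge x - DFun a b (fun t => fe t + ε * ke t) x) ^ 2 := by
      refine integral_congr fun x hx => ?_
      rw [Set.uIcc_of_le hab.le] at hx
      rw [DFun_congr hab.le hEg hx, DFun_congr hab.le hEsum hx]
    have h2 : (∫ x in a..b, (DFun a b g x - DFun a b f x) ^ 2)
        = ∫ x in a..b, (DFun a b ge x - DFun a b fe x) ^ 2 := by
      refine integral_congr fun x hx => ?_
      rw [Set.uIcc_of_le hab.le] at hx
      rw [DFun_congr hab.le hEg hx, DFun_congr hab.le hEf hx]
    rw [h1, h2]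
  have hval : (∫ x in a..b, k x * (uFun a b g x - uFun a b f x))
      = ∫ x in a..b, ke x * (uFun a b ge x - uFun a b fe x) := by
    refine integral_congr fun x hx => ?_
    rw [Set.uIcc_of_le hab.le] at hx
    rw [hEk hx, uFun_congr hab.le hEg hx, uFun_congr hab.le hEf hx]
  rw [hfun, hval]
  exact hmain
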